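/- arXiv:1502.01580 — 3 statements merged into one kernel-verified Lean document; each statement's English description precedes it below -/
import Mathlib

section
/- Let G be a connected finite simple graph with vertex set V(G) = {v_1, …, v_n} and let μ(G) be the Mycielskian of G. Then for all 1 ≤ i, j ≤ n with i ≠ j, the distance in μ(G) satisfies d_{μ(G)}(v_i, x_j) = min(d_G(v_i, v_j), 3); that is, d_{μ(G)}(v_i, x_j) = d_G(v_i, v_j) whenever d_G(v_i, v_j) ≤ 2, and d_{μ(G)}(v_i, x_j) = 3 whenever d_G(v_i, v_j) ≥ 3. -/
open SimpleGraph Finset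

/-- The Mycielskian of a simple graph `G`. Vertices: `some (Sum.inl a)` are the original
vertices `v_a`, `some (Sum.inr a)` are the copies `x_a`, and `none` is the extra vertex `x`. -/
def mycielskian {V : Type*} (G : SimpleGraph V) : SimpleGraph (Option (V ⊕ V)) where
  Adj u v := match u, v with
    | some (Sum.inl a), some (Sum.inl b) => G.Adj a b
    | some (Sum.inl a), some (Sum.inr b) => G.Adj a b
    | some (Sum.inr a), some (Sum.inl b) => G.Adj a b
    | some (Sum.inr _), none => True
    | none, some (Sum.inr _) => True
    | _, _ => False
  symm := by
    constructor
    rintro (_ | (a | a)) (_ | (b | b)) h <;> first | exact h.symm | exact h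
  loopless := by
    constructor
    rintro (_ | (a | a)) h
    · exact h
    · exact G.loopless.irrefl a h
    · exact h

instance mycielskian.adjDecidable {V : Type*} (G : SimpleGraph V) [DecidableRel G.Adj] :
    DecidableRel (mycielskian G).Adj := fun u v =>
  match u, v with
  | some (Sum.inl a), some (Sum.inl b) => inferInstanceAs (Decidable (G.Adj a b))
  | some (Sum.inl a), some (Sum.inr b) => inferInstanceAs (Decidable (G.Adj a b))
  | some (Sum.inr a), some (Sum.inl b) => inferInstanceAs (Decidable (G.Adj a b))
  | some (Sum.inr _), none => inferInstanceAs (Decidable True)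
  | none, some (Sum.inr _) => inferInstanceAs (Decidable True)
  | none, none => inferInstanceAs (Decidable False)
  | none, some (Sum.inl _) => inferInstanceAs (Decidable False)
  | some (Sum.inl _), none => inferInstanceAs (Decidable False)
  | some (Sum.inr _), some (Sum.inr _) => inferInstanceAs (Decidable False)

/-! A walk of `mycielskian G` from `v_a` to `x_b` that avoids `x` becomes, after folding every copy
`x_c` onto `v_c`, a walk of `G` from `a` to `b` of the same length; a walk through `x` has length at
least `3`, because `x` is adjacent only to copies and `v_a` is not one. Conversely, a shortest path
from `a` to `b` in `G` lifts by replacing its last vertex `v_b` with `x_b`, and `v_a, x_c, x, x_b`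
is a walk of length `3` for any neighbour `c` of `a`. -/

namespace mycielskian

variable {V : Type*} {G : SimpleGraph V} {a b c : V}

variable (G) in
def inlHom : G →g mycielskian G where
  toFun v := some (.inl v)
  map_rel' h := h

theorem adj_inl_inr : (mycielskian G).Adj (some (.inl a)) (some (.inr b)) ↔ G.Adj a b := .rfl

theorem adj_inr_none : (mycielskian G).Adj (some (.inr a)) none := trivial

theorem adj_none_inr : (mycielskian G).Adj none (some (.inr a)) := trivial

theorem adj_elim_of_adj_some {s t : V ⊕ V} (h : (mycielskian G).Adj (some s) (some t)) :
    G.Adj (Sum.elim id id s) (Sum.elim id id t) := by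
  rcases s with s | s <;> rcases t with t | t
  all_goals first | exact h | exact h.elim

theorem exists_walk_length_eq_of_none_notMem_support :
    ∀ {s t : V ⊕ V} (w : (mycielskian G).Walk (some s) (some t)), none ∉ w.support →
      ∃ p : G.Walk (Sum.elim id id s) (Sum.elim id id t), p.length = w.length
  | _, _, .nil, _ => ⟨.nil, rfl⟩
  | _, _, .cons (v := none) _ _, hw => absurd (by simp) hw
  | _, _, .cons (v := some _) h w, hw => by
    obtain ⟨p, hp⟩ := exists_walk_length_eq_of_none_notMem_support w (by simp_all)
    exact ⟨.cons (adj_elim_of_adj_some h) p, by simp [hp]⟩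

theorem three_le_length_of_none_mem_support
    (w : (mycielskian G).Walk (some (.inl a)) (some (.inr b))) (hw : none ∈ w.support) :
    3 ≤ w.length := by
  classical
  have hto : 1 < (w.takeUntil none hw).length :=
    (Reachable.one_lt_dist_of_ne_of_not_adj ⟨w.takeUntil none hw⟩ (by simp) id).trans_le
      (dist_le _)
  have hfrom : 0 < (w.dropUntil none hw).length :=
    Nat.pos_of_ne_zero fun h ↦ Walk.not_nil_of_ne (by simp) (Walk.length_eq_zero_iff.mp h)
  rw [← w.take_spec hw, Walk.length_append]
  omega

theorem min_dist_three_le_length (w : (mycielskian G).Walk (some (.inl a)) (some (.inr b))) :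
    min (G.dist a b) 3 ≤ w.length := by
  by_cases hw : none ∈ w.support
  · exact min_le_of_right_le (three_le_length_of_none_mem_support w hw)
  · obtain ⟨p, hp⟩ := exists_walk_length_eq_of_none_notMem_support w hw
    exact min_le_of_left_le (hp ▸ dist_le p)

theorem exists_walk_inl_inr_length_eq (p : G.Walk a b) (hp : ¬p.Nil) :
    ∃ q : (mycielskian G).Walk (some (.inl a)) (some (.inr b)), q.length = p.length :=
  ⟨(p.dropLast.map (inlHom G)).concat (adj_inl_inr.mpr (p.adj_penultimate hp)),
    ((Walk.length_concat _ _).trans (congrArg (· + 1) (Walk.length_map _ _))).trans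
      (Walk.length_dropLast_add_one hp)⟩

theorem dist_inl_inr_le_three (h : G.Adj a c) :
    (mycielskian G).dist (some (.inl a)) (some (.inr b)) ≤ 3 :=
  dist_le (.cons (adj_inl_inr.mpr h) <| .cons adj_inr_none <| .cons adj_none_inr .nil)

end mycielskian

theorem mycielskian_dist_mixed (n : ℕ) (G : SimpleGraph (Fin n)) (hG : G.Connected) :
    ∀ i j : Fin n, i ≠ j →
      (mycielskian G).dist (some (Sum.inl i)) (some (Sum.inr j)) = min (G.dist i j) 3 := by
  intro i j hij
  obtain ⟨p, hp⟩ := hG.exists_walk_length_eq_dist i j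
  have hp_nil : ¬p.Nil := Walk.not_nil_of_ne hij
  obtain ⟨q, hq⟩ := mycielskian.exists_walk_inl_inr_length_eq p hp_nil
  apply le_antisymm
  · exact le_min (hp ▸ hq ▸ dist_le q) (mycielskian.dist_inl_inr_le_three (p.adj_snd hp_nil))
  · obtain ⟨w, hw⟩ := Reachable.exists_walk_length_eq_dist ⟨q⟩
    exact hw ▸ mycielskian.min_dist_three_le_length w
end

section
/- Let G be a finite simple graph with at least one vertex, let μ(G) be the Mycielskian of G, and let μ̄ denote the complement of μ(G). Then μ̄ is connected and its diameter is exactly 2. -/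
open SimpleGraph Finset

/-!
In the complement of `μ(G)` the extra vertex `x` is adjacent to every original vertex `v_a`,
the copies `x_a` form a clique, and `v_a x_b` is an edge exactly when `v_a v_b` is not an edge
of `G`; in particular `v_a x_a` is always an edge. So any two vertices are joined by a path of
length at most two (through `x`, through `v_a` or through `x_a`), while `x` and `x_a` are at
distance exactly two.
-/

namespace SimpleGraph

variable {W : Type*} {H : SimpleGraph W} {u v w : W}

lemma edist_le_two_of_adj (h : H.Adj u v) : H.edist u v ≤ 2 :=
  (edist_le_one_iff_adj_or_eq.mpr (Or.inl h)).trans one_le_two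

lemma edist_le_two_of_adj_of_adj (huw : H.Adj u w) (hwv : H.Adj w v) : H.edist u v ≤ 2 := by
  simpa using (Walk.cons huw (Walk.cons hwv .nil)).edist_le

end SimpleGraph

section MycielskianCompl

variable {V : Type*} (G : SimpleGraph V)

lemma mycielskian_compl_adj_none_inl (b : V) :
    (mycielskian G)ᶜ.Adj none (some (.inl b)) := by
  simp [mycielskian]

lemma mycielskian_compl_not_adj_none_inr (b : V) :
    ¬ (mycielskian G)ᶜ.Adj none (some (.inr b)) := by
  simp [mycielskian]

lemma mycielskian_compl_adj_inl_inl {a b : V} (hne : a ≠ b) (hab : ¬ G.Adj a b) :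
    (mycielskian G)ᶜ.Adj (some (.inl a)) (some (.inl b)) := by
  simpa [mycielskian, hne] using hab

lemma mycielskian_compl_adj_inl_inr {a b : V} (hab : ¬ G.Adj a b) :
    (mycielskian G)ᶜ.Adj (some (.inl a)) (some (.inr b)) := by
  simpa [mycielskian] using hab

lemma mycielskian_compl_adj_inl_inr_self (a : V) :
    (mycielskian G)ᶜ.Adj (some (.inl a)) (some (.inr a)) :=
  mycielskian_compl_adj_inl_inr G (G.loopless.irrefl a)

lemma mycielskian_compl_adj_inr_inr {a b : V} (hne : a ≠ b) :
    (mycielskian G)ᶜ.Adj (some (.inr a)) (some (.inr b)) := by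
  simp [mycielskian, hne]

lemma mycielskian_compl_edist_le_two (u v : Option (V ⊕ V)) :
    (mycielskian G)ᶜ.edist u v ≤ 2 := by
  have hxv := mycielskian_compl_adj_none_inl G
  have hvx := mycielskian_compl_adj_inl_inr_self G
  rcases u with _ | (a | a) <;> rcases v with _ | (b | b)
  · simp
  · exact edist_le_two_of_adj (hxv b)
  · exact edist_le_two_of_adj_of_adj (hxv b) (hvx b)
  · exact edist_le_two_of_adj (hxv a).symm
  · exact edist_le_two_of_adj_of_adj (hxv a).symm (hxv b)
  · by_cases hab : G.Adj a b
    · exact edist_le_two_of_adj_of_adj (hvx a) (mycielskian_compl_adj_inr_inr G hab.ne)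
    · exact edist_le_two_of_adj (mycielskian_compl_adj_inl_inr G hab)
  · exact edist_le_two_of_adj_of_adj (hvx a).symm (hxv a).symm
  · by_cases hba : G.Adj b a
    · exact edist_le_two_of_adj_of_adj (mycielskian_compl_adj_inr_inr G hba.ne.symm) (hvx b).symm
    · exact edist_le_two_of_adj (mycielskian_compl_adj_inl_inr G hba).symm
  · by_cases hab : a = b
    · simp [hab]
    · exact edist_le_two_of_adj (mycielskian_compl_adj_inr_inr G hab)

lemma mycielskian_compl_edist_none_inr (a : V) :
    (mycielskian G)ᶜ.edist none (some (.inr a)) = 2 :=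
  edist_eq_two_iff.mpr ⟨by simp, mycielskian_compl_not_adj_none_inr G a,
    ⟨some (.inl a), mycielskian_compl_adj_none_inl G a, (mycielskian_compl_adj_inl_inr_self G a).symm⟩⟩

lemma mycielskian_compl_ediam_eq_two [Nonempty V] : (mycielskian G)ᶜ.ediam = 2 := by
  obtain ⟨a⟩ := ‹Nonempty V›
  refine le_antisymm (ediam_le_of_edist_le (mycielskian_compl_edist_le_two G)) ?_
  exact (mycielskian_compl_edist_none_inr G a).symm.le.trans edist_le_ediam

end MycielskianCompl

theorem mycielskian_compl_connected_diam_two_general {V : Type*} [Nonempty V]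
    (G : SimpleGraph V) :
    (mycielskian G)ᶜ.Connected ∧ (mycielskian G)ᶜ.diam = 2 := by
  have hediam := mycielskian_compl_ediam_eq_two G
  exact ⟨connected_of_ediam_ne_top (by simp [hediam]), by simp [diam, hediam]⟩

theorem mycielskian_compl_connected_diam_two {V : Type*} [Fintype V] [Nonempty V]
    (G : SimpleGraph V) :
    (mycielskian G)ᶜ.Connected ∧ (mycielskian G)ᶜ.diam = 2 :=
  mycielskian_compl_connected_diam_two_general G
end

section
/- Let G be a connected finite simple graph with vertex set V(G) = {v_1, …, v_n} whose diameter is 2, and let μ(G) be the Mycielskian of G. Then ∑_{(i,j) : 1 ≤ i, j ≤ n, i ≠ j} d_{μ(G)}(v_i, x_j)·deg_G(v_i) = DD(G), where the sum runs over all ordered pairs of distinct indices (i, j). -/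
open SimpleGraph Finset

/-- The first Zagreb index `M₁(G) = ∑ v (deg v)²`, as a rational number. -/
def zagreb1 {V : Type*} [Fintype V] (G : SimpleGraph V) [DecidableRel G.Adj] : ℚ :=
  ∑ v, (G.degree v : ℚ) ^ 2

/-- The second Zagreb index `M₂(G) = ∑_{uv ∈ E(G)} deg u · deg v`, as a rational number. -/
def zagreb2 {V : Type*} [Fintype V] (G : SimpleGraph V) [DecidableRel G.Adj] : ℚ :=
  ∑ e ∈ G.edgeFinset,
    Sym2.lift ⟨fun u v => (G.degree u : ℚ) * (G.degree v : ℚ), fun u v => by ring⟩ e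

/-- The Gutman index `Gut(H) = ∑_{{u,v} ⊆ V(H), u ≠ v} d(u,v)·deg u·deg v`, the sum running
over unordered pairs of distinct vertices (realized as half the sum over ordered pairs). -/
noncomputable def gutmanIndex {V : Type*} [Fintype V] [DecidableEq V] (H : SimpleGraph V)
    [DecidableRel H.Adj] : ℚ :=
  (∑ u, ∑ v, if u = v then 0 else (H.dist u v : ℚ) * H.degree u * H.degree v) / 2

/-- The degree distance `DD(G) = ∑_{{u,v} ⊆ V(G), u ≠ v} d(u,v)·(deg u + deg v)`, the sum
running over unordered pairs of distinct vertices (realized as half the ordered sum). -/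
noncomputable def degreeDistance {V : Type*} [Fintype V] [DecidableEq V] (H : SimpleGraph V)
    [DecidableRel H.Adj] : ℚ :=
  (∑ u, ∑ v, if u = v then 0 else (H.dist u v : ℚ) * (H.degree u + H.degree v)) / 2

/-!
For `i ≠ j`, a shortest `v_i`–`v_j` walk in `G` becomes a `v_i`–`x_j` walk of the same length in
`μ(G)` by redirecting its last edge to `x_j`, and `v_i x_j` is an edge exactly when `v_i v_j` is.
When `d_G(v_i, v_j) ≤ 2` this pins down `d_{μ(G)}(v_i, x_j) = d_G(v_i, v_j)`. The sum then becomes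
`∑_{i ≠ j} d(v_i, v_j) deg v_i`, which by symmetry of `d` is half of
`∑_{i ≠ j} d(v_i, v_j) (deg v_i + deg v_j)`, that is `DD(G)`.
-/

section Mycielskian

variable {V : Type*} (G : SimpleGraph V)

def mycielskianInl : G →g mycielskian G where
  toFun v := some (Sum.inl v)
  map_rel' h := h

theorem mycielskianInl_apply (v : V) : mycielskianInl G v = some (Sum.inl v) :=
  rfl

theorem mycielskian_adj_inl_inr {a b : V} :
    (mycielskian G).Adj (some (Sum.inl a)) (some (Sum.inr b)) ↔ G.Adj a b :=
  Iff.rfl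

variable {G}

theorem exists_mycielskian_walk_inl_inr {i j : V} (p : G.Walk i j) (hp : ¬p.Nil) :
    ∃ q : (mycielskian G).Walk (some (Sum.inl i)) (some (Sum.inr j)), q.length = p.length := by
  have h : (mycielskian G).Adj (mycielskianInl G p.penultimate) (some (Sum.inr j)) := by
    rw [mycielskianInl_apply, mycielskian_adj_inl_inr]
    exact p.adj_penultimate hp
  refine ⟨((p.dropLast.map (mycielskianInl G)).concat h).copy (mycielskianInl_apply G i) rfl, ?_⟩
  rw [Walk.length_copy, Walk.length_concat, Walk.length_map, Walk.length_dropLast_add_one hp]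

theorem mycielskian_dist_inl_inr_of_dist_le_two {i j : V} (hij : i ≠ j) (hr : G.Reachable i j)
    (h2 : G.dist i j ≤ 2) :
    (mycielskian G).dist (some (Sum.inl i)) (some (Sum.inr j)) = G.dist i j := by
  obtain ⟨p, hp⟩ := hr.exists_walk_length_eq_dist
  obtain ⟨q, hq⟩ := exists_mycielskian_walk_inl_inr p fun h => hij h.eq
  have hle := dist_le q
  have hμ0 : (mycielskian G).dist (some (Sum.inl i)) (some (Sum.inr j)) ≠ 0 :=
    dist_ne_zero_iff_ne_and_reachable.2 ⟨by simp, ⟨q⟩⟩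
  have hG0 : G.dist i j ≠ 0 := dist_ne_zero_iff_ne_and_reachable.2 ⟨hij, hr⟩
  have h1 : (mycielskian G).dist (some (Sum.inl i)) (some (Sum.inr j)) = 1 ↔ G.dist i j = 1 := by
    rw [dist_eq_one_iff_adj, dist_eq_one_iff_adj, mycielskian_adj_inl_inr]
  omega

end Mycielskian

theorem Finset.sum_offDiag_eq_sum_sum_ite {α M : Type*} [Fintype α] [DecidableEq α]
    [AddCommMonoid M] (f : α → α → M) :
    ∑ p ∈ univ.offDiag, f p.1 p.2 = ∑ u, ∑ v, if u = v then 0 else f u v := by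
  have hoff : (univ.offDiag : Finset (α × α)) = (univ ×ˢ univ).filter fun p => p.1 ≠ p.2 := by
    ext; simp
  rw [hoff, sum_filter, sum_product]
  simp only [ite_not]

theorem sum_offDiag_dist_mul_degree_eq_degreeDistance {V : Type*} [Fintype V] [DecidableEq V]
    (H : SimpleGraph V) [DecidableRel H.Adj] :
    ∑ p ∈ univ.offDiag, (H.dist p.1 p.2 : ℚ) * H.degree p.1 = degreeDistance H := by
  have hswap : ∑ p ∈ univ.offDiag, (H.dist p.1 p.2 : ℚ) * H.degree p.2
      = ∑ p ∈ univ.offDiag, (H.dist p.1 p.2 : ℚ) * H.degree p.1 :=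
    sum_nbij' Prod.swap Prod.swap (by simp [eq_comm]) (by simp [eq_comm]) (by simp) (by simp)
      fun p _ => by rw [Prod.fst_swap, Prod.snd_swap, dist_comm]
  rw [degreeDistance, ← sum_offDiag_eq_sum_sum_ite fun u v => (H.dist u v : ℚ) * _]
  simp only [mul_add, sum_add_distrib, hswap]
  ring

theorem sum_dist_mixed_deg (n : ℕ) (G : SimpleGraph (Fin n)) [DecidableRel G.Adj]
    (hconn : G.Connected) (hdiam : G.diam = 2) :
    ∑ p ∈ Finset.univ.offDiag,
        ((mycielskian G).dist (some (Sum.inl p.1)) (some (Sum.inr p.2)) : ℚ)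
          * G.degree p.1
      = degreeDistance G := by
  have hdist : ∀ i j, G.dist i j ≤ 2 := fun i j =>
    hdiam ▸ dist_le_diam (ediam_ne_top_of_diam_ne_zero (by omega))
  rw [← sum_offDiag_dist_mul_degree_eq_degreeDistance]
  refine sum_congr rfl fun p hp => ?_
  rw [mycielskian_dist_inl_inr_of_dist_le_two (mem_offDiag.1 hp).2.2 (hconn p.1 p.2) (hdist _ _)]
end
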